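/- Let ℋ be a finite-dimensional complex inner product space. Let A be a nonzero positive semidefinite self-adjoint operator on ℋ with nontrivial kernel, and let Δ > 0 be such that ⟨x, A x⟩ ≥ Δ‖x‖² for every x orthogonal to ker A (e.g. Δ the smallest nonzero eigenvalue of A). Let M be a nonzero self-adjoint operator with operator norm ‖M‖, and let α be a real number with α > max(4‖M‖/Δ, Δ/(3‖M‖²), 1). Set H := α·A + M. Then for every δ with 0 ≤ δ ≤ 1/α² and every unit vector ψ with ⟨ψ, H ψ⟩ ≤ λmin(H) + δ, there exists a unit vector φ ∈ ker A such that √(1 − |⟨ψ, φ⟩|²) ≤ 6‖M‖/(αΔ) and ⟨φ, H φ⟩ ≤ λmin(H) + δ + 12‖M‖²/(αΔ). -/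

import Mathlib

/-!
Write `ψ = b φ + y` with `φ` a unit vector in `ker A` and `y ⟂ ker A`, so that
`t = ‖y‖ = √(1 - |⟪ψ, φ⟫|²)`. The gap gives `⟪ψ, H ψ⟫ ≥ α Δ t² + ⟪φ, M φ⟫ - 2‖M‖t - 2‖M‖t²`,
while `λmin(H) ≤ ⟪φ, H φ⟫ = ⟪φ, M φ⟫`. Together with `⟪ψ, H ψ⟫ ≤ λmin(H) + δ` this gives
`α Δ t² ≤ δ + 2‖M‖t + 2‖M‖t²`. If `t > 6‖M‖/(αΔ)`, this forces `2‖M‖t < δ`, hence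
`12‖M‖² < δ α Δ ≤ Δ/α < 3‖M‖²`, which is absurd. Reading the same inequality as an upper bound
on `⟪φ, M φ⟫` and using `2‖M‖ ≤ αΔ` gives `⟪φ, H φ⟫ ≤ λmin(H) + δ + 2‖M‖t`.
-/

open scoped ComplexInnerProductSpace

/-- The smallest eigenvalue of a self-adjoint operator on a finite-dimensional complex
inner product space, expressed as the infimum of the Rayleigh quotient over unit vectors. -/
noncomputable def lamMin {ℋ : Type*} [NormedAddCommGroup ℋ] [InnerProductSpace ℂ ℋ]
    (A : ℋ →L[ℂ] ℋ) : ℝ :=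
  sInf {r : ℝ | ∃ x : ℋ, ‖x‖ = 1 ∧ r = (⟪x, A x⟫).re}

section InnerProductSpace

variable {ℋ : Type*} [NormedAddCommGroup ℋ] [InnerProductSpace ℂ ℋ]

lemma abs_re_inner_apply_le (T : ℋ →L[ℂ] ℋ) (x y : ℋ) :
    |(⟪x, T y⟫).re| ≤ ‖T‖ * ‖x‖ * ‖y‖ :=
  calc |(⟪x, T y⟫).re| ≤ ‖⟪x, T y⟫‖ := Complex.abs_re_le_norm _
    _ ≤ ‖x‖ * ‖T y‖ := norm_inner_le_norm _ _
    _ ≤ ‖x‖ * (‖T‖ * ‖y‖) := by gcongr; exact T.le_opNorm y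
    _ = ‖T‖ * ‖x‖ * ‖y‖ := by ring

lemma lamMin_le_re_inner (H : ℋ →L[ℂ] ℋ) {x : ℋ} (hx : ‖x‖ = 1) :
    lamMin H ≤ (⟪x, H x⟫).re := by
  refine csInf_le ⟨-‖H‖, ?_⟩ ⟨x, hx, rfl⟩
  rintro r ⟨y, hy, rfl⟩
  have := abs_re_inner_apply_le H y y
  rw [hy, mul_one, mul_one] at this
  exact (abs_le.mp this).1

lemma re_inner_smul_add_apply_self (α : ℝ) (A M : ℋ →L[ℂ] ℋ) (v : ℋ) :
    (⟪v, ((α : ℂ) • A + M) v⟫).re = α * (⟪v, A v⟫).re + (⟪v, M v⟫).re := by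
  simp

lemma inner_add_apply_add_of_mem_ker {A : ℋ →L[ℂ] ℋ} (hA : (A : ℋ →ₗ[ℂ] ℋ).IsSymmetric) {x : ℋ}
    (hx : x ∈ LinearMap.ker (A : ℋ →ₗ[ℂ] ℋ)) (y : ℋ) :
    ⟪x + y, A (x + y)⟫ = ⟪y, A y⟫ := by
  have hAx : A x = 0 := hx
  rw [map_add, hAx, zero_add, inner_add_left]
  have : ⟪x, A y⟫ = 0 := by rw [← ContinuousLinearMap.coe_coe A, ← hA x y]; simp [hAx]
  rw [this, zero_add]

lemma re_inner_apply_add_ge (M : ℋ →L[ℂ] ℋ) (x y : ℋ) :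
    (⟪x, M x⟫).re - 2 * ‖M‖ * ‖x‖ * ‖y‖ - ‖M‖ * ‖y‖ ^ 2 ≤ (⟪x + y, M (x + y)⟫).re := by
  have hxy := abs_re_inner_apply_le M x y
  have hyx := abs_re_inner_apply_le M y x
  have hyy := abs_re_inner_apply_le M y y
  simp only [map_add, inner_add_left, inner_add_right, Complex.add_re]
  linarith [(abs_le.mp hxy).1, (abs_le.mp hyx).1, (abs_le.mp hyy).1]

lemma re_inner_ofReal_smul_apply (M : ℋ →L[ℂ] ℋ) (b : ℝ) (φ : ℋ) :
    (⟪(b : ℂ) • φ, M ((b : ℂ) • φ)⟫).re = b ^ 2 * (⟪φ, M φ⟫).re := by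
  rw [map_smul, inner_smul_left, inner_smul_right, Complex.conj_ofReal, ← mul_assoc,
    ← Complex.ofReal_mul, Complex.re_ofReal_mul, sq]

lemma exists_norm_eq_one_smul_add_mem_orthogonal {K : Submodule ℂ ℋ} [K.HasOrthogonalProjection]
    (hK : K ≠ ⊥) (ψ : ℋ) : ∃ φ ∈ K, ‖φ‖ = 1 ∧ ∃ b : ℝ, ∃ y ∈ Kᗮ, ψ = (b : ℂ) • φ + y := by
  obtain ⟨x, hxK, y, hy, rfl⟩ := K.exists_add_mem_mem_orthogonal ψ
  by_cases hx0 : x = 0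
  · obtain ⟨z, hzK, hz0⟩ := (Submodule.ne_bot_iff K).mp hK
    exact ⟨_, K.smul_mem _ hzK, norm_smul_inv_norm hz0, 0, y, hy, by simp [hx0]⟩
  · refine ⟨_, K.smul_mem _ hxK, norm_smul_inv_norm hx0, ‖x‖, y, hy, ?_⟩
    simp [smul_smul, hx0]

variable {K : Submodule ℂ ℋ} {φ y : ℋ}

lemma norm_ofReal_smul_add_sq (hφK : φ ∈ K) (hφ : ‖φ‖ = 1) (hy : y ∈ Kᗮ) (b : ℝ) :
    ‖(b : ℂ) • φ + y‖ ^ 2 = b ^ 2 + ‖y‖ ^ 2 := by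
  have := norm_add_sq_eq_norm_sq_add_norm_sq_of_inner_eq_zero ((b : ℂ) • φ) y
    (Submodule.inner_right_of_mem_orthogonal (K.smul_mem _ hφK) hy)
  simp only [norm_smul, hφ, Complex.norm_real, Real.norm_eq_abs, mul_one] at this
  nlinarith [sq_abs b]

lemma norm_inner_ofReal_smul_add (hφK : φ ∈ K) (hφ : ‖φ‖ = 1) (hy : y ∈ Kᗮ) (b : ℝ) :
    ‖⟪(b : ℂ) • φ + y, φ⟫‖ = |b| := by
  rw [inner_add_left, Submodule.inner_left_of_mem_orthogonal hφK hy, inner_smul_left,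
    inner_self_eq_norm_sq_to_K, hφ]
  simp

lemma re_inner_smul_add_apply_ge {A : ℋ →L[ℂ] ℋ} (hA : (A : ℋ →ₗ[ℂ] ℋ).IsSymmetric) {Δ : ℝ}
    (hgap : ∀ x ∈ (LinearMap.ker (A : ℋ →ₗ[ℂ] ℋ))ᗮ, Δ * ‖x‖ ^ 2 ≤ (⟪x, A x⟫).re)
    (M : ℋ →L[ℂ] ℋ) {α : ℝ} (hα : 0 ≤ α) (hφK : φ ∈ LinearMap.ker (A : ℋ →ₗ[ℂ] ℋ))
    (hφ : ‖φ‖ = 1) (hy : y ∈ (LinearMap.ker (A : ℋ →ₗ[ℂ] ℋ))ᗮ) {b : ℝ}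
    (hb : b ^ 2 + ‖y‖ ^ 2 = 1) :
    α * Δ * ‖y‖ ^ 2 + (⟪φ, M φ⟫).re - 2 * ‖M‖ * ‖y‖ - 2 * ‖M‖ * ‖y‖ ^ 2 ≤
      (⟪(b : ℂ) • φ + y, ((α : ℂ) • A + M) ((b : ℂ) • φ + y)⟫).re := by
  have hbφK : (b : ℂ) • φ ∈ LinearMap.ker (A : ℋ →ₗ[ℂ] ℋ) := Submodule.smul_mem _ _ hφK
  have hbφ : ‖(b : ℂ) • φ‖ = |b| := by simp [norm_smul, hφ]
  have hA_energy : α * (Δ * ‖y‖ ^ 2) ≤ α * (⟪(b : ℂ) • φ + y, A ((b : ℂ) • φ + y)⟫).re := by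
    rw [inner_add_apply_add_of_mem_ker hA hbφK]
    exact mul_le_mul_of_nonneg_left (hgap y hy) hα
  have hM_energy := re_inner_apply_add_ge M ((b : ℂ) • φ) y
  rw [re_inner_ofReal_smul_apply, hbφ] at hM_energy
  have hφM := abs_re_inner_apply_le M φ φ
  rw [hφ, mul_one, mul_one] at hφM
  have hb1 : |b| ≤ 1 := by
    rw [← sq_le_one_iff_abs_le_one]
    nlinarith [sq_nonneg ‖y‖]
  have hb2 : (⟪φ, M φ⟫).re - ‖M‖ * ‖y‖ ^ 2 ≤ b ^ 2 * (⟪φ, M φ⟫).re := by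
    have := mul_le_mul_of_nonneg_left (abs_le.mp hφM).2 (sq_nonneg ‖y‖)
    rw [show b ^ 2 = 1 - ‖y‖ ^ 2 by linarith]
    linarith
  have hcross : ‖M‖ * |b| * ‖y‖ ≤ ‖M‖ * ‖y‖ := by
    have := mul_le_mul_of_nonneg_left hb1 (mul_nonneg (norm_nonneg M) (norm_nonneg y))
    linarith
  rw [re_inner_smul_add_apply_self]
  linarith

end InnerProductSpace

lemma le_div_and_le_add_div_of_energy_ineq {g m t e l δ : ℝ} (hm : 0 ≤ m) (ht0 : 0 ≤ t)
    (ht1 : t ≤ 1) (hgm : 4 * m < g) (hδg : δ * g < 3 * m ^ 2) (hle : l ≤ e)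
    (henergy : g * t ^ 2 + e - 2 * m * t - 2 * m * t ^ 2 ≤ l + δ) :
    t ≤ 6 * m / g ∧ e ≤ l + δ + 12 * m ^ 2 / g := by
  have hg : 0 < g := by linarith
  have ht : t ≤ 6 * m / g := by
    rw [le_div_iff₀ hg]
    by_contra! hcon
    have htpos : 0 < t := by nlinarith
    have h1 : 6 * m * t < g * t ^ 2 := by nlinarith
    have h2 : 2 * m * t < δ := by nlinarith [mul_nonneg hm (mul_nonneg ht0 (sub_nonneg.mpr ht1))]
    nlinarith [mul_lt_mul_of_pos_right h2 hg]
  refine ⟨ht, ?_⟩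
  have hmt : 2 * m * t ≤ 12 * m ^ 2 / g := by
    rw [le_div_iff₀ hg]
    have := (le_div_iff₀ hg).mp ht
    nlinarith
  nlinarith [sq_nonneg t]

lemma lt_mul_and_mul_mul_lt_of_max_lt {m Δ α δ : ℝ} (hm : 0 < m) (hΔ : 0 < Δ)
    (hα : max (max (4 * m / Δ) (Δ / (3 * m ^ 2))) 1 < α) (hδ : δ ≤ 1 / α ^ 2) :
    4 * m < α * Δ ∧ δ * (α * Δ) < 3 * m ^ 2 := by
  simp only [max_lt_iff, div_lt_iff₀ hΔ, div_lt_iff₀ (by positivity : (0 : ℝ) < 3 * m ^ 2)] at hα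
  obtain ⟨⟨hgm, hΔα⟩, hα1⟩ := hα
  refine ⟨hgm, ?_⟩
  calc δ * (α * Δ) ≤ 1 / α ^ 2 * (α * Δ) := by gcongr
    _ = Δ / α := by field_simp
    _ < 3 * m ^ 2 := by rw [div_lt_iff₀ (by linarith)]; linarith

theorem low_energy_state_close_to_kernel_history_state_general
    {ℋ : Type*} [NormedAddCommGroup ℋ] [InnerProductSpace ℂ ℋ] [FiniteDimensional ℂ ℋ]
    (A : ℋ →L[ℂ] ℋ) (hA : IsSelfAdjoint A)
    (hker : LinearMap.ker (A : ℋ →ₗ[ℂ] ℋ) ≠ ⊥)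
    (Δ : ℝ) (hΔ : 0 < Δ)
    (hgap : ∀ x ∈ (LinearMap.ker (A : ℋ →ₗ[ℂ] ℋ))ᗮ, Δ * ‖x‖ ^ 2 ≤ (⟪x, A x⟫).re)
    (M : ℋ →L[ℂ] ℋ) (hM0 : M ≠ 0)
    (α : ℝ) (hα : max (max (4 * ‖M‖ / Δ) (Δ / (3 * ‖M‖ ^ 2))) 1 < α)
    (δ : ℝ) (hδ : δ ≤ 1 / α ^ 2)
    (ψ : ℋ) (hψ : ‖ψ‖ = 1)
    (hlow : (⟪ψ, ((α : ℂ) • A + M) ψ⟫).re ≤ lamMin ((α : ℂ) • A + M) + δ) :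
    ∃ φ ∈ LinearMap.ker (A : ℋ →ₗ[ℂ] ℋ), ‖φ‖ = 1 ∧
      Real.sqrt (1 - ‖⟪ψ, φ⟫‖ ^ 2) ≤ 6 * ‖M‖ / (α * Δ) ∧
      (⟪φ, ((α : ℂ) • A + M) φ⟫).re ≤
        lamMin ((α : ℂ) • A + M) + δ + 12 * ‖M‖ ^ 2 / (α * Δ) := by
  have hMpos : 0 < ‖M‖ := norm_pos_iff.mpr hM0
  obtain ⟨hgm, hδg⟩ := lt_mul_and_mul_mul_lt_of_max_lt hMpos hΔ hα hδ
  obtain ⟨φ, hφK, hφ, b, y, hy, rfl⟩ := exists_norm_eq_one_smul_add_mem_orthogonal hker ψ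
  have hpyth : b ^ 2 + ‖y‖ ^ 2 = 1 := by
    rw [← norm_ofReal_smul_add_sq hφK hφ hy, hψ, one_pow]
  have hoverlap : Real.sqrt (1 - ‖⟪(b : ℂ) • φ + y, φ⟫‖ ^ 2) = ‖y‖ := by
    rw [norm_inner_ofReal_smul_add hφK hφ hy, sq_abs, ← hpyth, add_sub_cancel_left,
      Real.sqrt_sq (norm_nonneg y)]
  have hEφ : (⟪φ, ((α : ℂ) • A + M) φ⟫).re = (⟪φ, M φ⟫).re := by
    rw [re_inner_smul_add_apply_self, show A φ = 0 from hφK]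
    simp
  have henergy := re_inner_smul_add_apply_ge hA.isSymmetric hgap M (α := α)
    (by nlinarith) hφK hφ hy hpyth
  obtain ⟨hclose, hlowφ⟩ := le_div_and_le_add_div_of_energy_ineq (norm_nonneg M)
    (norm_nonneg y) (by nlinarith [sq_nonneg b, norm_nonneg y]) hgm hδg
    (lamMin_le_re_inner _ hφ) (by linarith)
  exact ⟨φ, hφK, hφ, hoverlap ▸ hclose, hEφ ▸ hlowφ⟩

/-- Any low-energy state of `H = α·A + M` is close to a state `φ` in the kernel of `A`,
and that kernel state has nearly the same energy. -/
theorem low_energy_state_close_to_kernel_history_state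
    {ℋ : Type*} [NormedAddCommGroup ℋ] [InnerProductSpace ℂ ℋ] [FiniteDimensional ℂ ℋ]
    (A : ℋ →L[ℂ] ℋ) (hA : IsSelfAdjoint A) (hA0 : A ≠ 0)
    (hApos : ∀ x : ℋ, 0 ≤ (⟪x, A x⟫).re)
    (hker : LinearMap.ker (A : ℋ →ₗ[ℂ] ℋ) ≠ ⊥)
    (Δ : ℝ) (hΔ : 0 < Δ)
    (hgap : ∀ x ∈ (LinearMap.ker (A : ℋ →ₗ[ℂ] ℋ))ᗮ, Δ * ‖x‖ ^ 2 ≤ (⟪x, A x⟫).re)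
    (M : ℋ →L[ℂ] ℋ) (hM : IsSelfAdjoint M) (hM0 : M ≠ 0)
    (α : ℝ) (hα : max (max (4 * ‖M‖ / Δ) (Δ / (3 * ‖M‖ ^ 2))) 1 < α)
    (δ : ℝ) (hδ0 : 0 ≤ δ) (hδ : δ ≤ 1 / α ^ 2)
    (ψ : ℋ) (hψ : ‖ψ‖ = 1)
    (hlow : (⟪ψ, ((α : ℂ) • A + M) ψ⟫).re ≤ lamMin ((α : ℂ) • A + M) + δ) :
    ∃ φ ∈ LinearMap.ker (A : ℋ →ₗ[ℂ] ℋ), ‖φ‖ = 1 ∧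
      Real.sqrt (1 - ‖⟪ψ, φ⟫‖ ^ 2) ≤ 6 * ‖M‖ / (α * Δ) ∧
      (⟪φ, ((α : ℂ) • A + M) φ⟫).re ≤
        lamMin ((α : ℂ) • A + M) + δ + 12 * ‖M‖ ^ 2 / (α * Δ) :=
  low_energy_state_close_to_kernel_history_state_general A hA hker Δ hΔ hgap M hM0 α hα δ hδ ψ hψ
    hlow
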